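/- arXiv:2110.14865 — 10 statements merged into one kernel-verified Lean document; each statement's English description precedes it below -/
import Mathlib

section
/- For every real number q with 1/2 < q < 1 and every odd positive integer K, the binomial tail satisfies T_{K+2}(q) > T_K(q); that is, ∑_{y=(K+3)/2}^{K+2} C(K+2,y) q^y (1-q)^{K+2-y} > ∑_{y=(K+1)/2}^{K} C(K,y) q^y (1-q)^{K-y}. -/
open Finset

/-- Tail of a Binomial(K,q): probability of at least (K+1)/2 successes. -/
noncomputable def binTail (q : ℝ) (K : ℕ) : ℝ :=
  ∑ y ∈ Finset.Icc ((K + 1) / 2) K, (K.choose y : ℝ) * q ^ y * (1 - q) ^ (K - y)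

lemma pascal2 (n k : ℕ) :
    (n + 2).choose (k + 2) = n.choose k + 2 * n.choose (k + 1) + n.choose (k + 2) := by
  rw [Nat.choose_succ_succ' (n + 1) (k + 1), Nat.choose_succ_succ' n k,
    Nat.choose_succ_succ' n (k + 1)]
  ring

lemma key (q : ℝ) (j : ℕ) :
    ∑ i ∈ range (j + 2), ((2 * j + 3).choose (j + 2 + i) : ℝ) * q ^ (j + 2 + i)
        * (1 - q) ^ (j + 1 - i)
    = (∑ i ∈ range (j + 1), ((2 * j + 1).choose (j + 1 + i) : ℝ) * q ^ (j + 1 + i)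
        * (1 - q) ^ (j - i))
      + ((2 * j + 1).choose (j + 1) : ℝ) * q ^ (j + 1) * (1 - q) ^ (j + 1) * (2 * q - 1) := by
  have hsplit : ∀ i ∈ range (j + 2),
      ((2 * j + 3).choose (j + 2 + i) : ℝ) * q ^ (j + 2 + i) * (1 - q) ^ (j + 1 - i)
      = ((2 * j + 1).choose (j + i) : ℝ) * q ^ (j + 2 + i) * (1 - q) ^ (j + 1 - i)
        + 2 * ((2 * j + 1).choose (j + 1 + i) : ℝ) * q ^ (j + 2 + i) * (1 - q) ^ (j + 1 - i)
        + ((2 * j + 1).choose (j + 2 + i) : ℝ) * q ^ (j + 2 + i) * (1 - q) ^ (j + 1 - i) := by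
    intro i _
    have h : (2 * j + 3).choose (j + 2 + i)
        = (2 * j + 1).choose (j + i) + 2 * (2 * j + 1).choose (j + 1 + i)
          + (2 * j + 1).choose (j + 2 + i) := by
      have := pascal2 (2 * j + 1) (j + i)
      have e1 : 2 * j + 1 + 2 = 2 * j + 3 := by ring
      have e2 : j + i + 2 = j + 2 + i := by ring
      have e3 : j + i + 1 = j + 1 + i := by ring
      rw [e1, e2, e3] at this
      exact this
    rw [h]
    push_cast
    ring
  rw [Finset.sum_congr rfl hsplit, Finset.sum_add_distrib, Finset.sum_add_distrib]
  -- SA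
  have hSA : ∑ i ∈ range (j + 2),
      ((2 * j + 1).choose (j + i) : ℝ) * q ^ (j + 2 + i) * (1 - q) ^ (j + 1 - i)
      = q ^ 2 * (∑ i ∈ range (j + 1), ((2 * j + 1).choose (j + 1 + i) : ℝ) * q ^ (j + 1 + i)
          * (1 - q) ^ (j - i))
        + ((2 * j + 1).choose j : ℝ) * q ^ (j + 2) * (1 - q) ^ (j + 1) := by
    rw [Finset.sum_range_succ']
    congr 1
    · rw [Finset.mul_sum]
      refine Finset.sum_congr rfl fun i _ => ?_
      have h1 : j + (i + 1) = j + 1 + i := by ring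
      have h2 : j + 2 + (i + 1) = (j + 1 + i) + 2 := by ring
      have h3 : j + 1 - (i + 1) = j - i := by omega
      rw [h1, h2, h3, pow_add]
      ring
  -- SB
  have hSB : ∑ i ∈ range (j + 2),
      2 * ((2 * j + 1).choose (j + 1 + i) : ℝ) * q ^ (j + 2 + i) * (1 - q) ^ (j + 1 - i)
      = 2 * q * (1 - q) * (∑ i ∈ range (j + 1),
          ((2 * j + 1).choose (j + 1 + i) : ℝ) * q ^ (j + 1 + i) * (1 - q) ^ (j - i)) := by
    rw [Finset.sum_range_succ]
    have hz : (2 * j + 1).choose (j + 1 + (j + 1)) = 0 :=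
      Nat.choose_eq_zero_of_lt (by omega)
    rw [hz]
    rw [Finset.mul_sum]
    simp only [Nat.cast_zero, zero_mul, mul_zero, add_zero]
    refine Finset.sum_congr rfl fun i hi => ?_
    have hij : i ≤ j := by simpa using Nat.lt_succ_iff.mp (Finset.mem_range.mp hi)
    have h2 : j + 2 + i = (j + 1 + i) + 1 := by ring
    have h3 : j + 1 - i = (j - i) + 1 := by omega
    rw [h2, h3, pow_succ, pow_succ]
    ring
  -- SC
  have hSC : ∑ i ∈ range (j + 2),
      ((2 * j + 1).choose (j + 2 + i) : ℝ) * q ^ (j + 2 + i) * (1 - q) ^ (j + 1 - i)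
      = (1 - q) ^ 2 * (∑ i ∈ range j,
          ((2 * j + 1).choose (j + 1 + (i + 1)) : ℝ) * q ^ (j + 1 + (i + 1))
            * (1 - q) ^ (j - (i + 1))) := by
    rw [Finset.sum_range_succ, Finset.sum_range_succ]
    have hz1 : (2 * j + 1).choose (j + 2 + (j + 1)) = 0 :=
      Nat.choose_eq_zero_of_lt (by omega)
    have hz2 : (2 * j + 1).choose (j + 2 + j) = 0 :=
      Nat.choose_eq_zero_of_lt (by omega)
    rw [hz1, hz2]
    simp only [Nat.cast_zero, zero_mul, add_zero]
    rw [Finset.mul_sum]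
    refine Finset.sum_congr rfl fun i hi => ?_
    have hij : i < j := Finset.mem_range.mp hi
    have h2 : j + 2 + i = (j + 1 + (i + 1)) := by ring
    have h3 : j + 1 - i = (j - (i + 1)) + 2 := by omega
    rw [h2, h3, pow_add]
    ring
  rw [hSA, hSB, hSC]
  -- expand T as U + t0
  rw [Finset.sum_range_succ' (fun i => ((2 * j + 1).choose (j + 1 + i) : ℝ) * q ^ (j + 1 + i)
      * (1 - q) ^ (j - i)) j]
  have hsym : ((2 * j + 1).choose j : ℝ) = ((2 * j + 1).choose (j + 1) : ℝ) := by
    have := Nat.choose_symm (n := 2 * j + 1) (k := j) (by omega)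
    have e : 2 * j + 1 - j = j + 1 := by omega
    rw [e] at this
    exact_mod_cast congrArg (Nat.cast (R := ℝ)) this.symm
  rw [hsym]
  simp only [Nat.add_zero, Nat.sub_zero, Nat.add_sub_cancel]
  ring

/-- For 1/2 < q < 1 and odd positive K, the binomial tail strictly increases
when the batch size increases from K to K+2. -/
theorem binTail_strict_mono (q : ℝ) (hq : 1 / 2 < q) (hq1 : q < 1)
    (K : ℕ) (hK : Odd K) (hKpos : 0 < K) :
    binTail q (K + 2) > binTail q K := by
  obtain ⟨j, rfl⟩ := hK
  unfold binTail
  have e1 : (2 * j + 1 + 2 + 1) / 2 = j + 2 := by omega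
  have e2 : (2 * j + 1 + 1) / 2 = j + 1 := by omega
  rw [e1, e2, ← Finset.Ico_add_one_right_eq_Icc (j + 2), ← Finset.Ico_add_one_right_eq_Icc (j + 1),
    Finset.sum_Ico_eq_sum_range, Finset.sum_Ico_eq_sum_range]
  have c1 : 2 * j + 1 + 2 + 1 - (j + 2) = j + 2 := by omega
  have c2 : 2 * j + 1 + 1 - (j + 1) = j + 1 := by omega
  rw [c1, c2]
  have hL : ∑ i ∈ range (j + 2), ((2 * j + 1 + 2).choose (j + 2 + i) : ℝ) * q ^ (j + 2 + i)
      * (1 - q) ^ (2 * j + 1 + 2 - (j + 2 + i))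
      = ∑ i ∈ range (j + 2), ((2 * j + 3).choose (j + 2 + i) : ℝ) * q ^ (j + 2 + i)
      * (1 - q) ^ (j + 1 - i) := by
    refine Finset.sum_congr rfl fun i _ => ?_
    have h1 : 2 * j + 1 + 2 = 2 * j + 3 := by ring
    have h2 : 2 * j + 1 + 2 - (j + 2 + i) = j + 1 - i := by omega
    rw [h1, h2]
  have hR : ∑ i ∈ range (j + 1), ((2 * j + 1).choose (j + 1 + i) : ℝ) * q ^ (j + 1 + i)
      * (1 - q) ^ (2 * j + 1 - (j + 1 + i))
      = ∑ i ∈ range (j + 1), ((2 * j + 1).choose (j + 1 + i) : ℝ) * q ^ (j + 1 + i)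
      * (1 - q) ^ (j - i) := by
    refine Finset.sum_congr rfl fun i _ => ?_
    have h2 : 2 * j + 1 - (j + 1 + i) = j - i := by omega
    rw [h2]
  rw [hL, hR, key q j]
  have hq0 : (0 : ℝ) < q := by linarith
  have h1q : (0 : ℝ) < 1 - q := by linarith
  have h2q : (0 : ℝ) < 2 * q - 1 := by linarith
  have hch : (0 : ℝ) < ((2 * j + 1).choose (j + 1) : ℝ) := by
    exact_mod_cast Nat.choose_pos (by omega)
  have hc : 0 < ((2 * j + 1).choose (j + 1) : ℝ) * q ^ (j + 1) * (1 - q) ^ (j + 1)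
      * (2 * q - 1) :=
    mul_pos (mul_pos (mul_pos hch (pow_pos hq0 _)) (pow_pos h1q _)) h2q
  linarith
end

section
/- For every real number q with 1/2 < q < 1 and every odd integer K ≥ 3, setting m := (K-3)/2, one has [∑_{y=0}^{m} C(K,y) q^y (1-q)^{K-y} + C(K,(K-1)/2) q^{(K-1)/2} (1-q)^{(K+1)/2}] / [∑_{y=0}^{m} C(K,y) (1-q)^y q^{K-y} + C(K,(K-1)/2) (1-q)^{(K-1)/2} q^{(K+1)/2}] > [∑_{y=0}^{m} C(K,y) q^y (1-q)^{K-y}] / [∑_{y=0}^{m} C(K,y) (1-q)^y q^{K-y}]. -/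
open Finset

/-- Adding the central term C(K,(K-1)/2) q^{(K-1)/2}(1-q)^{(K+1)/2} to the numerator
and its mirror to the denominator strictly increases the ratio of lower binomial tails. -/
theorem ratio_with_central_term_gt (q : ℝ) (hq : 1 / 2 < q) (hq1 : q < 1)
    (K : ℕ) (hK : Odd K) (hK3 : 3 ≤ K) :
    ((∑ y ∈ Finset.range ((K - 3) / 2 + 1), (K.choose y : ℝ) * q ^ y * (1 - q) ^ (K - y))
        + (K.choose ((K - 1) / 2) : ℝ) * q ^ ((K - 1) / 2) * (1 - q) ^ ((K + 1) / 2)) /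
      ((∑ y ∈ Finset.range ((K - 3) / 2 + 1), (K.choose y : ℝ) * (1 - q) ^ y * q ^ (K - y))
        + (K.choose ((K - 1) / 2) : ℝ) * (1 - q) ^ ((K - 1) / 2) * q ^ ((K + 1) / 2)) >
    (∑ y ∈ Finset.range ((K - 3) / 2 + 1), (K.choose y : ℝ) * q ^ y * (1 - q) ^ (K - y)) /
      (∑ y ∈ Finset.range ((K - 3) / 2 + 1), (K.choose y : ℝ) * (1 - q) ^ y * q ^ (K - y)) := by
  obtain ⟨n, hn⟩ := hK
  obtain ⟨m, rfl⟩ : ∃ m, K = 2 * m + 3 := ⟨n - 1, by omega⟩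
  have e1 : (2 * m + 3 - 3) / 2 = m := by omega
  have e2 : (2 * m + 3 - 1) / 2 = m + 1 := by omega
  have e3 : (2 * m + 3 + 1) / 2 = m + 2 := by omega
  rw [e1, e2, e3]
  have hq0 : (0:ℝ) < q := by linarith
  have hq' : (0:ℝ) < 1 - q := by linarith
  have h1q : 1 - q < q := by linarith
  set A := ∑ y ∈ Finset.range (m + 1), ((2*m+3).choose y : ℝ) * q ^ y * (1 - q) ^ (2*m+3 - y) with hA
  set B := ∑ y ∈ Finset.range (m + 1), ((2*m+3).choose y : ℝ) * (1 - q) ^ y * q ^ (2*m+3 - y) with hB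
  set c := ((2*m+3).choose (m+1) : ℝ) * q ^ (m+1) * (1 - q) ^ (m+2) with hc
  set d := ((2*m+3).choose (m+1) : ℝ) * (1 - q) ^ (m+1) * q ^ (m+2) with hd
  have hC' : (0:ℝ) < ((2*m+3).choose (m+1) : ℝ) := by
    exact_mod_cast Nat.choose_pos (by omega)
  have hd0 : 0 < d := by
    rw [hd]; positivity
  have hBpos : 0 < B := by
    rw [hB]
    apply Finset.sum_pos _ ⟨0, by simp⟩
    intro y hy
    simp only [Finset.mem_range] at hy
    have : (0:ℝ) < ((2*m+3).choose y : ℝ) := by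
      exact_mod_cast Nat.choose_pos (by omega)
    positivity
  have key : A * d < c * B := by
    rw [hA, hB, Finset.sum_mul, Finset.mul_sum]
    apply Finset.sum_lt_sum_of_nonempty ⟨0, by simp⟩
    intro y hy
    simp only [Finset.mem_range] at hy
    obtain ⟨k, rfl⟩ : ∃ k, m = y + k := ⟨m - y, by omega⟩
    have hsub : 2 * (y + k) + 3 - y = y + 2 * k + 3 := by omega
    rw [hsub]
    have hCy : (0:ℝ) < ((2*(y+k)+3).choose y : ℝ) := by
      exact_mod_cast Nat.choose_pos (by omega)
    have keypow : (1-q)^(2*k+2) < q^(2*k+2) := by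
      apply pow_lt_pow_left₀ h1q hq'.le (by omega)
    have hposP : (0:ℝ) < ((2*(y+k)+3).choose y : ℝ) * ((2*(y+k)+3).choose (y+k+1) : ℝ)
        * (q * (1-q)) ^ (2*y+k+2) := by positivity
    calc ((2*(y+k)+3).choose y : ℝ) * q ^ y * (1 - q) ^ (y + 2*k + 3) * d
        = (((2*(y+k)+3).choose y : ℝ) * ((2*(y+k)+3).choose (y+k+1) : ℝ)
            * (q * (1-q)) ^ (2*y+k+2)) * (1-q)^(2*k+2) := by
          rw [hd, mul_pow]; ring
      _ < (((2*(y+k)+3).choose y : ℝ) * ((2*(y+k)+3).choose (y+k+1) : ℝ)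
            * (q * (1-q)) ^ (2*y+k+2)) * q^(2*k+2) :=
          mul_lt_mul_of_pos_left keypow hposP
      _ = c * (((2*(y+k)+3).choose y : ℝ) * (1 - q) ^ y * q ^ (y + 2*k + 3)) := by
          rw [hc, mul_pow]; ring
  rw [gt_iff_lt, div_lt_div_iff₀ hBpos (by linarith)]
  nlinarith [key]
end

section
/- For every real number q with 1/2 < q < 1 and all natural numbers m ≤ K, one has ∑_{y=0}^{m} C(K,y) (1-q)^y q^{K-y} ≥ (q/(1-q))^{K-2m} · ∑_{y=0}^{m} C(K,y) q^y (1-q)^{K-y}. -/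
open Finset

/-- ∑_{y=0}^{m} C(K,y)(1-q)^y q^{K-y} ≥ (q/(1-q))^{K-2m} · ∑_{y=0}^{m} C(K,y) q^y (1-q)^{K-y}. -/
theorem sum_flipped_ge_zpow_mul_sum (q : ℝ) (hq : 1 / 2 < q) (hq1 : q < 1)
    (K m : ℕ) (hm : m ≤ K) :
    ∑ y ∈ Finset.range (m + 1), (K.choose y : ℝ) * (1 - q) ^ y * q ^ (K - y) ≥
      (q / (1 - q)) ^ ((K : ℤ) - 2 * (m : ℤ)) *
        ∑ y ∈ Finset.range (m + 1), (K.choose y : ℝ) * q ^ y * (1 - q) ^ (K - y) := by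
  have h0 : (0:ℝ) < q := by linarith
  have h1 : (0:ℝ) < 1 - q := by linarith
  have hr : 1 < q / (1 - q) := by rw [lt_div_iff₀ h1]; linarith
  have hrpos : (0:ℝ) < q / (1 - q) := by positivity
  rw [ge_iff_le, Finset.mul_sum]
  apply Finset.sum_le_sum
  intro y hy
  have hym : y ≤ m := Nat.lt_succ_iff.mp (Finset.mem_range.mp hy)
  have hyK : y ≤ K := le_trans hym hm
  have heq : (K.choose y : ℝ) * (1 - q) ^ y * q ^ (K - y)
      = (q/(1-q)) ^ ((K:ℤ) - 2*(y:ℤ)) * ((K.choose y : ℝ) * q ^ y * (1 - q) ^ (K - y)) := by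
    have hcast : ((K:ℤ) - 2*(y:ℤ)) = ((K - y : ℕ) : ℤ) - (y:ℤ) := by
      push_cast [Nat.cast_sub hyK]; ring
    rw [hcast, zpow_sub₀ (ne_of_gt hrpos), zpow_natCast, zpow_natCast, div_pow, div_pow]
    field_simp
  rw [heq]
  apply mul_le_mul_of_nonneg_right
  · apply zpow_le_zpow_right₀ hr.le
    omega
  · positivity
end

section
/- For all natural numbers y, z, K with y < z ≤ K - 2, the binomial coefficients satisfy C(K,z) · C(K-2,y) > C(K,y) · C(K-2,z). -/
lemma choose_two_step (m k : ℕ) :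
    (m+2).choose k * ((m+2-k)*(m+1-k)) = m.choose k * ((m+2)*(m+1)) := by
  have h1 := Nat.choose_mul_succ_eq (m+1) k
  have h2 := Nat.choose_mul_succ_eq m k
  calc (m+2).choose k * ((m+2-k)*(m+1-k))
      = ((m+2).choose k * (m+1+1-k)) * (m+1-k) := by ring_nf
    _ = ((m+1).choose k * (m+1+1)) * (m+1-k) := by rw [← h1]
    _ = ((m+1).choose k * (m+1-k)) * (m+2) := by ring
    _ = (m.choose k * (m+1)) * (m+2) := by rw [← h2]
    _ = m.choose k * ((m+2)*(m+1)) := by ring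

/-- For y < z ≤ K - 2, C(K,z) · C(K-2,y) > C(K,y) · C(K-2,z). -/
theorem choose_mul_choose_gt (y z K : ℕ) (hyz : y < z) (hz : z ≤ K - 2) :
    K.choose z * (K - 2).choose y > K.choose y * (K - 2).choose z := by
  obtain ⟨m, rfl⟩ : ∃ m, K = m + 2 := ⟨K - 2, by omega⟩
  have hm2 : m + 2 - 2 = m := by omega
  rw [hm2] at hz ⊢
  have hym : y ≤ m := by omega
  have hA := choose_two_step m z
  have hC := choose_two_step m y
  have hwlt : (m+2-z)*(m+1-z) < (m+2-y)*(m+1-y) :=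
    Nat.mul_lt_mul_of_lt_of_le (by omega) (by omega) (by omega)
  have hCD : 0 < (m+2).choose y * m.choose z :=
    Nat.mul_pos (Nat.choose_pos (by omega)) (Nat.choose_pos hz)
  have key : (m+2).choose z * m.choose y * ((m+2-z)*(m+1-z))
      = (m+2).choose y * m.choose z * ((m+2-y)*(m+1-y)) := by
    calc (m+2).choose z * m.choose y * ((m+2-z)*(m+1-z))
        = ((m+2).choose z * ((m+2-z)*(m+1-z))) * m.choose y := by ring
      _ = (m.choose z * ((m+2)*(m+1))) * m.choose y := by rw [hA]
      _ = ((m.choose y * ((m+2)*(m+1)))) * m.choose z := by ring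
      _ = ((m+2).choose y * ((m+2-y)*(m+1-y))) * m.choose z := by rw [hC]
      _ = (m+2).choose y * m.choose z * ((m+2-y)*(m+1-y)) := by ring
  have hlt : (m+2).choose y * m.choose z * ((m+2-z)*(m+1-z))
      < (m+2).choose z * m.choose y * ((m+2-z)*(m+1-z)) := by
    rw [key]
    exact Nat.mul_lt_mul_of_pos_left hwlt hCD
  exact Nat.lt_of_mul_lt_mul_right hlt
end

section
/- For every real number q with 1/2 < q < 1, every odd positive integer K, and every real μ with 0 < μ < 1: μ q G_K(q) ≥ (1-μ)(1-q) B_K(q) if and only if μ ≥ 1 - T_K(q), where G_K(q) := ∑_{y=(K+1)/2}^{K} (1/y) C(K-1,y-1) q^{y-1} (1-q)^{K-y}, B_K(q) := ∑_{y=(K+1)/2}^{K} (1/y) C(K-1,y-1) q^{K-y} (1-q)^{y-1}, and T_K(q) := ∑_{y=(K+1)/2}^{K} C(K,y) q^y (1-q)^{K-y}. -/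
open Finset

/-- Probability that a fixed opting-in agent receives the object, conditional on good quality. -/
noncomputable def allocG (q : ℝ) (K : ℕ) : ℝ :=
  ∑ y ∈ Finset.Icc ((K + 1) / 2) K,
    (1 / (y : ℝ)) * ((K - 1).choose (y - 1) : ℝ) * q ^ (y - 1) * (1 - q) ^ (K - y)

/-- Probability that a fixed opting-in agent receives the object, conditional on bad quality. -/
noncomputable def allocB (q : ℝ) (K : ℕ) : ℝ :=
  ∑ y ∈ Finset.Icc ((K + 1) / 2) K,
    (1 / (y : ℝ)) * ((K - 1).choose (y - 1) : ℝ) * q ^ (K - y) * (1 - q) ^ (y - 1)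

lemma key_choose (K y : ℕ) (hy : 1 ≤ y) (hyK : y ≤ K) :
    (K : ℝ) * ((K - 1).choose (y - 1) : ℝ) = (K.choose y : ℝ) * y := by
  have h := Nat.add_one_mul_choose_eq (K - 1) (y - 1)
  have hK : K - 1 + 1 = K := by omega
  have hy' : y - 1 + 1 = y := by omega
  rw [hK, hy'] at h
  exact_mod_cast h

lemma qG (q : ℝ) (K : ℕ) (hKpos : 0 < K) :
    q * allocG q K = binTail q K / K := by
  unfold allocG binTail
  rw [Finset.mul_sum, Finset.sum_div]
  refine Finset.sum_congr rfl fun y hy => ?_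
  simp only [Finset.mem_Icc] at hy
  have hy1 : 1 ≤ y := by omega
  have hc := key_choose K y hy1 hy.2
  have hpow : q ^ y = q * q ^ (y - 1) := by
    conv_lhs => rw [show y = (y - 1) + 1 by omega]
    rw [pow_succ]; ring
  have hK0 : (K : ℝ) ≠ 0 := by positivity
  have hy0 : (y : ℝ) ≠ 0 := by positivity
  field_simp
  rw [hpow]
  linear_combination (q * q ^ (y - 1) * (1 - q) ^ (K - y)) * hc

lemma qB (q : ℝ) (K : ℕ) (hK : Odd K) (hKpos : 0 < K) :
    (1 - q) * allocB q K = (1 - binTail q K) / K := by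
  have step1 : (1 - q) * allocB q K =
      (∑ y ∈ Finset.Icc ((K + 1) / 2) K, (K.choose y : ℝ) * q ^ (K - y) * (1 - q) ^ y) / K := by
    unfold allocB
    rw [Finset.mul_sum, Finset.sum_div]
    refine Finset.sum_congr rfl fun y hy => ?_
    simp only [Finset.mem_Icc] at hy
    have hy1 : 1 ≤ y := by omega
    have hc := key_choose K y hy1 hy.2
    have hpow : (1 - q) ^ y = (1 - q) * (1 - q) ^ (y - 1) := by
      conv_lhs => rw [show y = (y - 1) + 1 by omega]
      rw [pow_succ]; ring
    have hK0 : (K : ℝ) ≠ 0 := by positivity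
    have hy0 : (y : ℝ) ≠ 0 := by positivity
    field_simp
    rw [hpow]
    linear_combination ((1 - q) * (1 - q) ^ (y - 1) * q ^ (K - y)) * hc
  obtain ⟨t, ht⟩ := hK
  have reind : ∑ y ∈ Finset.Icc ((K + 1) / 2) K, (K.choose y : ℝ) * q ^ (K - y) * (1 - q) ^ y
      = ∑ j ∈ Finset.range ((K + 1) / 2), (K.choose j : ℝ) * q ^ j * (1 - q) ^ (K - j) := by
    refine Finset.sum_nbij' (fun y => K - y) (fun j => K - j) ?_ ?_ ?_ ?_ ?_
    · intro a ha; simp only [Finset.mem_Icc] at ha; simp only [Finset.mem_range]; omega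
    · intro a ha; simp only [Finset.mem_range] at ha; simp only [Finset.mem_Icc]; omega
    · intro a ha; simp only [Finset.mem_Icc] at ha; show K - (K - a) = a; omega
    · intro a ha; simp only [Finset.mem_range] at ha; show K - (K - a) = a; omega
    · intro a ha
      simp only [Finset.mem_Icc] at ha
      rw [Nat.choose_symm ha.2, show K - (K - a) = a by omega]
  have binom : ∑ j ∈ Finset.range (K + 1), (K.choose j : ℝ) * q ^ j * (1 - q) ^ (K - j) = 1 := by
    have h := add_pow q (1 - q) K
    simp only [add_sub_cancel, one_pow] at h
    exact (Finset.sum_congr rfl fun j _ => by ring).trans h.symm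
  have split : ∑ j ∈ Finset.range ((K + 1) / 2), (K.choose j : ℝ) * q ^ j * (1 - q) ^ (K - j)
      + binTail q K = 1 := by
    unfold binTail
    rw [show Finset.Icc ((K + 1) / 2) K = Finset.Ico ((K + 1) / 2) (K + 1) from
      (Finset.Ico_add_one_right_eq_Icc _ _).symm,
      Finset.sum_range_add_sum_Ico
        (fun j => (K.choose j : ℝ) * q ^ j * (1 - q) ^ (K - j))
        (show (K + 1) / 2 ≤ K + 1 by omega)]
    exact binom
  rw [step1, reind]
  have : ∑ j ∈ Finset.range ((K + 1) / 2), (K.choose j : ℝ) * q ^ j * (1 - q) ^ (K - j)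
      = 1 - binTail q K := by linarith
  rw [this]

/-- The incentive-compatibility constraint for an agent with a positive signal holds
iff the prior is at least 1 - T_K(q). -/
theorem ic_good_signal_iff (q : ℝ) (hq : 1 / 2 < q) (hq1 : q < 1)
    (K : ℕ) (hK : Odd K) (hKpos : 0 < K) (μ : ℝ) (hμ0 : 0 < μ) (hμ1 : μ < 1) :
    μ * q * allocG q K ≥ (1 - μ) * (1 - q) * allocB q K ↔ μ ≥ 1 - binTail q K := by
  have hA := qG q K hKpos
  have hB := qB q K hK hKpos
  have hKR : (0 : ℝ) < K := by exact_mod_cast hKpos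
  have hKne : (K : ℝ) ≠ 0 := ne_of_gt hKR
  have e1 : μ * q * allocG q K = μ * binTail q K / K := by
    rw [mul_assoc, hA]; ring
  have e2 : (1 - μ) * (1 - q) * allocB q K = (1 - μ) * (1 - binTail q K) / K := by
    rw [mul_assoc, hB]; ring
  rw [e1, e2]
  have h3 : μ * binTail q K / K - (1 - μ) * (1 - binTail q K) / K
      = (μ - (1 - binTail q K)) / K := by field_simp; ring
  constructor <;> intro h
  · have h4 : 0 ≤ (μ - (1 - binTail q K)) / K := by rw [← h3]; linarith [h]
    have h5 := mul_nonneg h4 hKR.le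
    rw [div_mul_cancel₀ _ hKne] at h5
    linarith
  · have h4 : 0 ≤ (μ - (1 - binTail q K)) / K := div_nonneg (by linarith) hKR.le
    rw [← h3] at h4
    linarith
end

section
/- For every real number q with 1/2 < q < 1, every odd positive integer K, and every real μ with 0 < μ < 1: μ (1-q) G_K(q) ≤ (1-μ) q B_K(q) if and only if μ ≤ q²(1 - T_K(q)) / (q²(1 - T_K(q)) + (1-q)² T_K(q)), where G_K(q) := ∑_{y=(K+1)/2}^{K} (1/y) C(K-1,y-1) q^{y-1} (1-q)^{K-y}, B_K(q) := ∑_{y=(K+1)/2}^{K} (1/y) C(K-1,y-1) q^{K-y} (1-q)^{y-1}, and T_K(q) := ∑_{y=(K+1)/2}^{K} C(K,y) q^y (1-q)^{K-y}. -/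
open Finset

/-!
Absorbing the factor `1/y` through `K · C(K-1, y-1) = y · C(K, y)` gives
`K q G_K(q) = T_K(q)`, and since `B_K(q) = G_K(1-q)` also `K (1-q) B_K(q) = T_K(1-q)`.
For odd `K` a majority of successes at rate `1-q` is a minority at rate `q`, so
`T_K(1-q) = 1 - T_K(q)`. Multiplying the constraint by `K q (1-q) > 0` turns it into
`μ (1-q)² T_K(q) ≤ (1-μ) q² (1 - T_K(q))`, which is linear in `μ`.
-/

lemma natCast_mul_choose_pred {n y : ℕ} (hy : 1 ≤ y) :
    (n : ℝ) * ((n - 1).choose (y - 1) : ℝ) = y * (n.choose y : ℝ) := by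
  obtain ⟨j, rfl⟩ : ∃ j, y = j + 1 := ⟨y - 1, by omega⟩
  rcases n with _ | n
  · simp
  · simpa [mul_comm] using congrArg (Nat.cast (R := ℝ)) (Nat.add_one_mul_choose_eq n j)

lemma natCast_mul_mul_allocG (q : ℝ) {K : ℕ} (hK : 0 < K) :
    (K : ℝ) * q * allocG q K = binTail q K := by
  rw [allocG, binTail, mul_sum]
  refine sum_congr rfl fun y hy => ?_
  have hy1 : 1 ≤ y := by rw [mem_Icc] at hy; omega
  have hqy : q ^ y = q * q ^ (y - 1) := by rw [← pow_succ', Nat.sub_add_cancel hy1]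
  have hcoeff : 1 / (y : ℝ) * (K * ((K - 1).choose (y - 1) : ℝ)) = K.choose y := by
    rw [natCast_mul_choose_pred hy1]
    field_simp
  rw [hqy]
  linear_combination q * q ^ (y - 1) * (1 - q) ^ (K - y) * hcoeff

lemma allocB_eq_allocG_one_sub (q : ℝ) (K : ℕ) : allocB q K = allocG (1 - q) K := by
  simp only [allocB, allocG, sub_sub_cancel]
  exact sum_congr rfl fun y _ => by ring

lemma binTail_add_binTail_one_sub (q : ℝ) {K : ℕ} (hK : Odd K) :
    binTail q K + binTail (1 - q) K = 1 := by
  obtain ⟨k, hk⟩ := hK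
  set f : ℕ → ℝ := fun j => (K.choose j : ℝ) * q ^ j * (1 - q) ^ (K - j)
  have hhalf : (K + 1) / 2 = k + 1 := by omega
  have htail : binTail q K = ∑ j ∈ Ico (k + 1) (K + 1), f j := by
    rw [binTail, hhalf, Ico_add_one_right_eq_Icc]
  have hreflect : binTail (1 - q) K = ∑ j ∈ range (k + 1), f j := by
    have hbounds : Ico 0 (k + 1) = Ico (K + 1 - (K + 1)) (K + 1 - (k + 1)) := by
      congr 1 <;> omega
    rw [binTail, hhalf, ← Ico_add_one_right_eq_Icc, range_eq_Ico, hbounds,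
      ← sum_Ico_reflect f (k + 1) le_rfl]
    refine sum_congr rfl fun j hj => ?_
    have hjK : j ≤ K := by rw [mem_Ico] at hj; omega
    simp only [f, sub_sub_cancel, Nat.choose_symm hjK, Nat.sub_sub_self hjK]
    ring
  have hbinomial := add_pow q (1 - q) K
  rw [add_sub_cancel, one_pow] at hbinomial
  rw [htail, hreflect, add_comm, sum_range_add_sum_Ico f (by omega), hbinomial]
  exact sum_congr rfl fun _ _ => by ring

lemma binTail_nonneg {q : ℝ} (hq0 : 0 ≤ q) (hq1 : q ≤ 1) (K : ℕ) : 0 ≤ binTail q K :=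
  sum_nonneg fun _ _ => by have := sub_nonneg.2 hq1; positivity

lemma natCast_mul_mul_allocB (q : ℝ) {K : ℕ} (hK : Odd K) :
    (K : ℝ) * (1 - q) * allocB q K = 1 - binTail q K := by
  rw [allocB_eq_allocG_one_sub, natCast_mul_mul_allocG _ hK.pos]
  linarith [binTail_add_binTail_one_sub q hK]

lemma binTail_le_one {q : ℝ} (hq0 : 0 ≤ q) (hq1 : q ≤ 1) {K : ℕ} (hK : Odd K) :
    binTail q K ≤ 1 := by
  linarith [binTail_add_binTail_one_sub q hK,
    binTail_nonneg (sub_nonneg.2 hq1) (sub_le_self 1 hq0) K]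

lemma mul_le_one_sub_mul_iff_le_div {μ a b : ℝ} (hab : 0 < a + b) :
    μ * b ≤ (1 - μ) * a ↔ μ ≤ a / (a + b) := by
  rw [le_div_iff₀ hab]
  constructor <;> intro h <;> linarith

theorem ic_bad_signal_iff_general (q : ℝ) (hq : 1 / 2 < q) (hq1 : q < 1)
    (K : ℕ) (hK : Odd K) (μ : ℝ) :
    μ * (1 - q) * allocG q K ≤ (1 - μ) * q * allocB q K ↔
      μ ≤ q ^ 2 * (1 - binTail q K) /
        (q ^ 2 * (1 - binTail q K) + (1 - q) ^ 2 * binTail q K) := by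
  have hq0 : 0 < q := by linarith
  have hq1' : 0 < 1 - q := sub_pos.2 hq1
  have hT0 := binTail_nonneg hq0.le hq1.le K
  have hT1 := binTail_le_one hq0.le hq1.le hK
  have hD : 0 < q ^ 2 * (1 - binTail q K) + (1 - q) ^ 2 * binTail q K := by nlinarith
  have hscale : 0 < (K : ℝ) * q * (1 - q) := by
    have : (0 : ℝ) < K := by exact_mod_cast hK.pos
    positivity
  have hlhs : μ * (1 - q) * allocG q K * (K * q * (1 - q)) =
      μ * ((1 - q) ^ 2 * binTail q K) := by
    rw [← natCast_mul_mul_allocG q hK.pos]; ring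
  have hrhs : (1 - μ) * q * allocB q K * (K * q * (1 - q)) =
      (1 - μ) * (q ^ 2 * (1 - binTail q K)) := by
    rw [← natCast_mul_mul_allocB q hK]; ring
  rw [← mul_le_one_sub_mul_iff_le_div hD, ← mul_le_mul_iff_of_pos_right hscale, hlhs, hrhs]

/-- The incentive-compatibility constraint for an agent with a negative signal holds
iff the prior is at most q²(1-T_K)/(q²(1-T_K) + (1-q)²T_K). -/
theorem ic_bad_signal_iff (q : ℝ) (hq : 1 / 2 < q) (hq1 : q < 1)
    (K : ℕ) (hK : Odd K) (hKpos : 0 < K) (μ : ℝ) (hμ0 : 0 < μ) (hμ1 : μ < 1) :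
    μ * (1 - q) * allocG q K ≤ (1 - μ) * q * allocB q K ↔
      μ ≤ q ^ 2 * (1 - binTail q K) /
        (q ^ 2 * (1 - binTail q K) + (1 - q) ^ 2 * binTail q K) :=
  ic_bad_signal_iff_general q hq hq1 K hK μ
end

section
/- For every real number q with 1/2 < q < 1 and every real μ with 0 < μ < q, there exists an odd positive integer K such that lb_K(q) < μ < ub_K(q), where lb_K(q) := 1 - T_K(q), ub_K(q) := q²(1 - T_K(q)) / (q²(1 - T_K(q)) + (1-q)² T_K(q)), and T_K(q) := ∑_{y=(K+1)/2}^{K} C(K,y) q^y (1-q)^{K-y}. (Equivalently: an incentive-compatible single-batch voting mechanism exists whenever μ < q.) -/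
open Finset Filter

/-- Lower endpoint of the incentive-compatible prior interval for batch size K. -/
noncomputable def lb (q : ℝ) (K : ℕ) : ℝ := 1 - binTail q K

/-- Upper endpoint of the incentive-compatible prior interval for batch size K. -/
noncomputable def ub (q : ℝ) (K : ℕ) : ℝ :=
  q ^ 2 * (1 - binTail q K) /
    (q ^ 2 * (1 - binTail q K) + (1 - q) ^ 2 * binTail q K)

/-!
Let `E m` be the probability that a Binomial(2m+1, q) count is at most `m`, so that
`lb q (2m+1) = E m`. For `1/2 ≤ q` and `μ < q`, the bound `μ < ub q (2m+1)` already follows from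
`(1 - q) μ < q E m`, so it suffices to find `m` with `(1 - q) μ < q E m` and `E m < μ`.
Now `E 0 = 1 - q` satisfies the first inequality, `E m ≤ (4q(1-q))^m → 0` (Condorcet's jury
theorem), and by Pascal's rule `E (m+1) = E m - (2q - 1) q P(X = m)` with `X ~ Binomial(2m+1, q)`,
so `E` never drops by more than the factor `(1 - q)/q` in one step. Hence the first `m` with
`E m < μ` works.
-/

noncomputable def binomProb (q : ℝ) (n y : ℕ) : ℝ :=
  (n.choose y : ℝ) * q ^ y * (1 - q) ^ (n - y)

-- The probability of *fewer than* `j` successes, so that `binomCDF q n 0 = 0`.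
noncomputable def binomCDF (q : ℝ) (n j : ℕ) : ℝ :=
  ∑ y ∈ range j, binomProb q n y

theorem binomProb_succ_succ (q : ℝ) (n y : ℕ) :
    binomProb q (n + 1) (y + 1) = q * binomProb q n y + (1 - q) * binomProb q n (y + 1) := by
  simp only [binomProb, Nat.choose_succ_succ, Nat.cast_add, Nat.succ_sub_succ]
  rcases lt_or_ge y n with h | h
  · rw [show n - y = n - (y + 1) + 1 by omega, pow_succ]
    ring
  · rw [Nat.choose_eq_zero_of_lt (Nat.lt_succ_of_le h), Nat.sub_eq_zero_of_le h]
    ring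

theorem binomProb_zero_succ (q : ℝ) (n : ℕ) :
    binomProb q (n + 1) 0 = (1 - q) * binomProb q n 0 := by
  simp [binomProb, pow_succ, mul_comm]

theorem binomCDF_succ (q : ℝ) (n j : ℕ) :
    binomCDF q n (j + 1) = binomCDF q n j + binomProb q n j :=
  sum_range_succ _ _

theorem binomCDF_succ_succ (q : ℝ) (n j : ℕ) :
    binomCDF q (n + 1) (j + 1) = (1 - q) * binomCDF q n (j + 1) + q * binomCDF q n j := by
  induction j with
  | zero => simp [binomCDF, binomProb_zero_succ]
  | succ j ih =>
    rw [binomCDF_succ q (n + 1), ih, binomProb_succ_succ, binomCDF_succ q n (j + 1),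
      binomCDF_succ q n j]
    ring

theorem binomCDF_self (q : ℝ) (n : ℕ) : binomCDF q n (n + 1) = 1 := by
  calc binomCDF q n (n + 1) = (q + (1 - q)) ^ n := by
        rw [add_pow]
        exact sum_congr rfl fun y _ => by rw [binomProb]; ring
    _ = 1 := by rw [add_sub_cancel, one_pow]

theorem binomProb_pos {q : ℝ} (hq0 : 0 < q) (hq1 : q < 1) {n y : ℕ} (h : y ≤ n) :
    0 < binomProb q n y := by
  have : 0 < 1 - q := by linarith
  have := Nat.choose_pos h
  unfold binomProb
  positivity

theorem binomCDF_nonneg {q : ℝ} (hq0 : 0 ≤ q) (hq1 : q ≤ 1) (n j : ℕ) :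
    0 ≤ binomCDF q n j := by
  have : 0 ≤ 1 - q := by linarith
  exact sum_nonneg fun y _ => by unfold binomProb; positivity

theorem binomProb_median_symm (q : ℝ) (m : ℕ) :
    (1 - q) * binomProb q (2 * m + 1) (m + 1) = q * binomProb q (2 * m + 1) m := by
  rw [binomProb, binomProb, Nat.choose_symm_half, show 2 * m + 1 - (m + 1) = m by omega,
    show 2 * m + 1 - m = m + 1 by omega]
  ring

noncomputable def majorityError (q : ℝ) (m : ℕ) : ℝ := binomCDF q (2 * m + 1) (m + 1)

theorem binTail_odd (q : ℝ) (m : ℕ) : binTail q (2 * m + 1) = 1 - majorityError q m := by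
  have h : binTail q (2 * m + 1) =
      ∑ y ∈ Ico (m + 1) (2 * m + 1 + 1), binomProb q (2 * m + 1) y := by
    rw [Ico_add_one_right_eq_Icc, show m + 1 = (2 * m + 1 + 1) / 2 by omega]
    rfl
  rw [eq_sub_iff_add_eq', majorityError, ← binomCDF_self q (2 * m + 1), h, binomCDF, binomCDF,
    sum_range_add_sum_Ico _ (by omega)]

theorem majorityError_zero (q : ℝ) : majorityError q 0 = 1 - q := by
  simp [majorityError, binomCDF, binomProb]

theorem majorityError_succ (q : ℝ) (m : ℕ) :
    majorityError q (m + 1) = majorityError q m - (2 * q - 1) * q * binomProb q (2 * m + 1) m := by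
  have h1 := binomCDF_succ_succ q (2 * m + 2) (m + 1)
  have h2 := binomCDF_succ_succ q (2 * m + 1) (m + 1)
  have h3 := binomCDF_succ_succ q (2 * m + 1) m
  have h4 := binomCDF_succ q (2 * m + 1) (m + 1)
  have h5 := binomCDF_succ q (2 * m + 1) m
  have h6 := binomProb_median_symm q m
  unfold majorityError
  rw [show 2 * (m + 1) + 1 = 2 * m + 2 + 1 by ring]
  linear_combination h1 + (1 - q) * h2 + q * h3 + (1 - q) ^ 2 * h4 - q ^ 2 * h5 + (1 - q) * h6

theorem mul_majorityError_lt {q : ℝ} (hq : 1 / 2 < q) (hq1 : q < 1) (m : ℕ) :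
    (1 - q) * majorityError q m < q * majorityError q (m + 1) := by
  have hS := binomCDF_nonneg (by linarith) hq1.le (2 * m + 1) m
  have hb := binomProb_pos (by linarith) hq1 (n := 2 * m + 1) (y := m) (by omega)
  have hpos : 0 < (2 * q - 1) *
      (binomCDF q (2 * m + 1) m + (1 - q ^ 2) * binomProb q (2 * m + 1) m) := by
    have : 0 < 1 - q ^ 2 := by nlinarith
    have : 0 < 2 * q - 1 := by linarith
    positivity
  rw [majorityError_succ, majorityError, binomCDF_succ]
  linear_combination hpos

theorem majorityError_le {q : ℝ} (hq : 1 / 2 ≤ q) (hq1 : q ≤ 1) (m : ℕ) :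
    majorityError q m ≤ (4 * q * (1 - q)) ^ m := by
  have hq0 : 0 ≤ q := by linarith
  have hp0 : 0 ≤ 1 - q := by linarith
  have hterm : ∀ y ∈ range (m + 1),
      binomProb q (2 * m + 1) y ≤ ((2 * m + 1).choose y : ℝ) * (q ^ m * (1 - q) ^ (m + 1)) := by
    intro y hy
    have hy : y ≤ m := Nat.lt_succ_iff.1 (mem_range.1 hy)
    have hpow : (1 - q) ^ (m - y) ≤ q ^ (m - y) := pow_le_pow_left₀ hp0 (by linarith) _
    rw [binomProb, mul_assoc, show 2 * m + 1 - y = m - y + (m + 1) by omega, pow_add,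
      ← mul_assoc (q ^ y), show q ^ m = q ^ y * q ^ (m - y) by rw [← pow_add]; congr 1; omega]
    gcongr
  calc majorityError q m
      ≤ ∑ y ∈ range (m + 1), ((2 * m + 1).choose y : ℝ) * (q ^ m * (1 - q) ^ (m + 1)) :=
        sum_le_sum hterm
    _ = (4 * q * (1 - q)) ^ m * (1 - q) := by
        rw [← sum_mul, ← Nat.cast_sum, Nat.sum_range_choose_halfway]
        push_cast
        rw [mul_pow, mul_pow, pow_succ]
        ring
    _ ≤ (4 * q * (1 - q)) ^ m := mul_le_of_le_one_right (by positivity) (by linarith)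

theorem tendsto_majorityError {q : ℝ} (hq : 1 / 2 < q) (hq1 : q ≤ 1) :
    Tendsto (majorityError q) atTop (nhds 0) := by
  have hr : 4 * q * (1 - q) < 1 := by nlinarith [sq_nonneg (2 * q - 1)]
  refine squeeze_zero (fun m => binomCDF_nonneg (by linarith) hq1 _ _)
    (majorityError_le hq.le hq1)
    (tendsto_pow_atTop_nhds_zero_of_lt_one ?_ hr)
  nlinarith

theorem exists_mul_lt_mul_and_lt {α : Type*} [Mul α] [Zero α] [LinearOrder α] [PosMulMono α]
    {u : ℕ → α} {a b c : α} (ha : 0 ≤ a) (h0 : a * b < c * u 0)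
    (hstep : ∀ m, a * u m < c * u (m + 1)) (hlim : ∃ m, u m < b) :
    ∃ m, a * b < c * u m ∧ u m < b := by
  classical
  refine ⟨Nat.find hlim, ?_, Nat.find_spec hlim⟩
  cases hm : Nat.find hlim with
  | zero => exact h0
  | succ k =>
    have hk : b ≤ u k := not_lt.1 (Nat.find_min hlim (by omega))
    exact (mul_le_mul_of_nonneg_left hk ha).trans_lt (hstep k)

theorem lt_div_of_mul_lt_mul {q μ L : ℝ} (hq : 1 / 2 ≤ q) (hq1 : q < 1) (hμ0 : 0 < μ)
    (hμq : μ < q) (hL : (1 - q) * μ < q * L) (hL1 : L ≤ 1) :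
    μ < q ^ 2 * L / (q ^ 2 * L + (1 - q) ^ 2 * (1 - L)) := by
  have hL0 : 0 < L := by nlinarith
  have hD : 0 < q ^ 2 * L + (1 - q) ^ 2 * (1 - L) := by
    have : 0 ≤ 1 - L := by linarith
    positivity
  rw [lt_div_iff₀ hD]
  -- `q ^ 2 * (1 - μ) + μ * (1 - q) ^ 2 = q * (1 - q) + (2 * q - 1) * (q - μ)`
  nlinarith [mul_pos hμ0 (sub_pos.2 hq1),
    mul_nonneg (by linarith : 0 ≤ 2 * q - 1) (sub_pos.2 hμq).le]

/-- For any prior μ with 0 < μ < q there exists an odd positive batch size K whose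
incentive-compatible prior interval contains μ. -/
theorem exists_ic_batch (q : ℝ) (hq : 1 / 2 < q) (hq1 : q < 1)
    (μ : ℝ) (hμ0 : 0 < μ) (hμq : μ < q) :
    ∃ K : ℕ, Odd K ∧ 0 < K ∧ lb q K < μ ∧ μ < ub q K := by
  have hstart : (1 - q) * μ < q * majorityError q 0 := by
    rw [majorityError_zero]
    nlinarith
  obtain ⟨m, hlow, hhigh⟩ := exists_mul_lt_mul_and_lt (by linarith) hstart
    (mul_majorityError_lt hq hq1)
    ((tendsto_majorityError hq hq1.le).eventually (gt_mem_nhds hμ0)).exists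
  refine ⟨2 * m + 1, odd_two_mul_add_one m, by omega, ?_, ?_⟩
  · rwa [lb, binTail_odd, sub_sub_cancel]
  · rw [ub, binTail_odd, sub_sub_cancel]
    exact lt_div_of_mul_lt_mul hq.le hq1 hμ0 hμq hlow (by linarith)
end

section
/- For every real number q with 1/2 < q < 1 and every odd positive integer 𝒦, the union of the open intervals (lb_K(q), ub_K(q)) over all odd K with 1 ≤ K ≤ 𝒦 equals the open interval (lb_𝒦(q), q), where lb_K(q) := 1 - T_K(q), ub_K(q) := q²(1 - T_K(q)) / (q²(1 - T_K(q)) + (1-q)² T_K(q)), and T_K(q) := ∑_{y=(K+1)/2}^{K} C(K,y) q^y (1-q)^{K-y}. -/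
open Finset Filter

/-!
Write `K = 2n + 1` and `L n := lb q K`, the probability that a Binomial(K, q) variable is at most
`n`. Pascal's rule applied twice gives `L (n + 1) = L n - (2q - 1) q C(2n+1, n) qⁿ (1-q)ⁿ⁺¹`, so
the lower endpoints decrease from `L 0 = 1 - q`. The upper endpoint is the Bayesian posterior
`q² L / (q² L + (1-q)² (1-L))` of the prior `L` after two concordant signals of precision `q`:
it is at most `q` since `L ≤ 1 - q`, and it exceeds the previous lower endpoint `L n` since the
decrement is at most `(2q - 1) q L n`. So each new interval overlaps the union of the earlier
ones, which by induction is `(L n, q)`.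
-/

noncomputable def binPmf (q : ℝ) (K j : ℕ) : ℝ := K.choose j * q ^ j * (1 - q) ^ (K - j)

noncomputable def binCdf (q : ℝ) (K m : ℕ) : ℝ := ∑ j ∈ range m, binPmf q K j

noncomputable def posterior (q x : ℝ) : ℝ := q ^ 2 * x / (q ^ 2 * x + (1 - q) ^ 2 * (1 - x))

section Binomial

variable {q : ℝ}

lemma binPmf_nonneg (hq0 : 0 ≤ q) (hq1 : q ≤ 1) (K j : ℕ) : 0 ≤ binPmf q K j := by
  have : 0 ≤ 1 - q := sub_nonneg.2 hq1
  unfold binPmf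
  positivity

lemma sum_binPmf (q : ℝ) (K : ℕ) : ∑ j ∈ range (K + 1), binPmf q K j = 1 := by
  have h := add_pow q (1 - q) K
  rw [add_sub_cancel, one_pow] at h
  rw [h]
  exact sum_congr rfl fun j _ => by unfold binPmf; ring

lemma binPmf_zero (q : ℝ) (K : ℕ) : binPmf q K 0 = (1 - q) ^ K := by
  simp [binPmf]

lemma binPmf_succ_succ (q : ℝ) (K j : ℕ) :
    binPmf q (K + 1) (j + 1) = q * binPmf q K j + (1 - q) * binPmf q K (j + 1) := by
  unfold binPmf
  rw [Nat.choose_succ_succ, Nat.add_sub_add_right]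
  rcases lt_or_ge K (j + 1) with hK | hK
  · rw [Nat.choose_eq_zero_of_lt hK]
    push_cast
    ring
  · rw [show K - j = K - (j + 1) + 1 by omega]
    push_cast
    ring

lemma binPmf_le_binCdf (hq0 : 0 ≤ q) (hq1 : q ≤ 1) {K j m : ℕ} (hj : j < m) :
    binPmf q K j ≤ binCdf q K m :=
  single_le_sum (fun i _ => binPmf_nonneg hq0 hq1 K i) (mem_range.2 hj)

lemma binCdf_succ_succ (q : ℝ) (K m : ℕ) :
    binCdf q (K + 1) (m + 1) = binCdf q K (m + 1) - q * binPmf q K m := by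
  induction m with
  | zero =>
    rw [binCdf, binCdf, zero_add, sum_range_one, sum_range_one, binPmf_zero, binPmf_zero,
      pow_succ]
    ring
  | succ m ih =>
    rw [binCdf, sum_range_succ, ← binCdf, ih, binPmf_succ_succ, binCdf, binCdf,
      sum_range_succ _ (m + 1)]
    ring

lemma one_sub_binTail (q : ℝ) (K : ℕ) : 1 - binTail q K = binCdf q K ((K + 1) / 2) := by
  rw [← sum_binPmf q K, binCdf, binTail, ← Ico_add_one_right_eq_Icc,
    ← sum_range_add_sum_Ico _ (by omega : (K + 1) / 2 ≤ K + 1)]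
  exact add_sub_cancel_right _ _

end Binomial

section Endpoints

variable {q : ℝ}

lemma lb_eq_binCdf (q : ℝ) (n : ℕ) : lb q (2 * n + 1) = binCdf q (2 * n + 1) (n + 1) := by
  rw [lb, one_sub_binTail]
  congr 1
  omega

lemma lb_one (q : ℝ) : lb q 1 = 1 - q := by
  simp [lb_eq_binCdf q 0, binCdf, binPmf]

/-- Pascal's rule twice; the two boundary terms combine through `C(2n+1, n+1) = C(2n+1, n)`. -/
lemma lb_add_two (q : ℝ) (n : ℕ) :
    lb q (2 * n + 3) = lb q (2 * n + 1) - (2 * q - 1) * (q * binPmf q (2 * n + 1) n) := by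
  have hsymm : (1 - q) * binPmf q (2 * n + 1) (n + 1) = q * binPmf q (2 * n + 1) n := by
    simp only [binPmf, Nat.choose_symm_half, show 2 * n + 1 - (n + 1) = n by omega,
      show 2 * n + 1 - n = n + 1 by omega]
    ring
  have hlb : lb q (2 * n + 3) = binCdf q ((2 * n + 1 + 1) + 1) ((n + 1) + 1) :=
    lb_eq_binCdf q (n + 1)
  rw [hlb, lb_eq_binCdf, binCdf_succ_succ, binCdf_succ_succ q (2 * n + 1) (n + 1),
    binPmf_succ_succ q (2 * n + 1) n, binCdf, sum_range_succ, ← binCdf]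
  linear_combination (1 - q) * hsymm

lemma lb_pos (hq0 : 0 ≤ q) (hq1 : q < 1) (n : ℕ) : 0 < lb q (2 * n + 1) := by
  rw [lb_eq_binCdf]
  calc 0 < (1 - q) ^ (2 * n + 1) := pow_pos (sub_pos.2 hq1) _
    _ = binPmf q (2 * n + 1) 0 := (binPmf_zero q _).symm
    _ ≤ _ := binPmf_le_binCdf hq0 hq1.le n.succ_pos

lemma lb_add_two_le (hq : 1 / 2 ≤ q) (hq1 : q ≤ 1) (n : ℕ) :
    lb q (2 * n + 3) ≤ lb q (2 * n + 1) := by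
  rw [lb_add_two]
  exact sub_le_self _ <| mul_nonneg (by linarith) <|
    mul_nonneg (by linarith) (binPmf_nonneg (by linarith) hq1 _ _)

lemma lb_le_one_sub (hq : 1 / 2 ≤ q) (hq1 : q ≤ 1) (n : ℕ) : lb q (2 * n + 1) ≤ 1 - q := by
  induction n with
  | zero => exact (lb_one q).le
  | succ n ih => exact (lb_add_two_le hq hq1 n).trans ih

lemma ub_eq_posterior (q : ℝ) (K : ℕ) : ub q K = posterior q (lb q K) := by
  rw [ub, posterior, lb, sub_sub_cancel]

end Endpoints

section Posterior

variable {q x : ℝ}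

lemma posterior_one_sub (hq0 : 0 < q) (hq1 : q < 1) : posterior q (1 - q) = q := by
  have : 0 < 1 - q := sub_pos.2 hq1
  rw [posterior, sub_sub_cancel, div_eq_iff (by positivity)]
  ring

lemma posterior_le (hq0 : 0 < q) (hq1 : q < 1) (hx : 0 < x) (hxq : x ≤ 1 - q) :
    posterior q x ≤ q := by
  have h1q : 0 < 1 - q := sub_pos.2 hq1
  have hD : 0 < q ^ 2 * x + (1 - q) ^ 2 * (1 - x) := by nlinarith
  rw [posterior, div_le_iff₀ hD]
  nlinarith [mul_nonneg (mul_nonneg hq0.le h1q.le) (sub_nonneg.2 hxq)]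

lemma lt_posterior_sub (hq : 1 / 2 < q) (hq1 : q < 1) (hx : 0 < x) (hxq : x ≤ 1 - q)
    {E : ℝ} (hE : 0 ≤ E) (hEx : E ≤ q * x) : x < posterior q (x - (2 * q - 1) * E) := by
  have hx' : 0 < x - (2 * q - 1) * E := by nlinarith
  have hD : 0 < q ^ 2 * (x - (2 * q - 1) * E) + (1 - q) ^ 2 * (1 - (x - (2 * q - 1) * E)) := by
    nlinarith
  have hgap : 0 < x * (1 - x) - E * (q ^ 2 * (1 - x) + (1 - q) ^ 2 * x) := by
    nlinarith [mul_le_mul_of_nonneg_right hEx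
      (by nlinarith : (0 : ℝ) ≤ q ^ 2 * (1 - x) + (1 - q) ^ 2 * x)]
  rw [posterior, lt_div_iff₀ hD]
  linear_combination mul_pos (by linarith : (0 : ℝ) < 2 * q - 1) hgap

end Posterior

section Union

variable {q : ℝ}

lemma ub_le (hq : 1 / 2 < q) (hq1 : q < 1) (n : ℕ) : ub q (2 * n + 1) ≤ q := by
  rw [ub_eq_posterior]
  exact posterior_le (by linarith) hq1 (lb_pos (by linarith) hq1 n)
    (lb_le_one_sub hq.le hq1.le n)

lemma lb_lt_ub_add_two (hq : 1 / 2 < q) (hq1 : q < 1) (n : ℕ) :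
    lb q (2 * n + 1) < ub q (2 * n + 3) := by
  have hpmf : binPmf q (2 * n + 1) n ≤ lb q (2 * n + 1) :=
    lb_eq_binCdf q n ▸ binPmf_le_binCdf (by linarith) hq1.le n.lt_succ_self
  rw [ub_eq_posterior, lb_add_two]
  exact lt_posterior_sub hq hq1 (lb_pos (by linarith) hq1 n) (lb_le_one_sub hq.le hq1.le n)
    (mul_nonneg (by linarith) (binPmf_nonneg (by linarith) hq1.le _ _))
    (mul_le_mul_of_nonneg_left hpmf (by linarith))

lemma biUnion_Ioo_lb_ub (hq : 1 / 2 < q) (hq1 : q < 1) (n : ℕ) :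
    (⋃ K ∈ {K : ℕ | Odd K ∧ 1 ≤ K ∧ K ≤ 2 * n + 1}, Set.Ioo (lb q K) (ub q K)) =
      Set.Ioo (lb q (2 * n + 1)) q := by
  induction n with
  | zero =>
    have hK : {K : ℕ | Odd K ∧ 1 ≤ K ∧ K ≤ 2 * 0 + 1} = {1} := by
      ext K
      simp only [Set.mem_ofPred_eq, Set.mem_singleton_iff, Nat.odd_iff]
      omega
    rw [hK, Set.biUnion_singleton, ub_eq_posterior, lb_one,
      posterior_one_sub (by linarith) hq1]
  | succ n ih =>
    rw [show 2 * (n + 1) + 1 = 2 * n + 3 by ring]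
    have hK : {K : ℕ | Odd K ∧ 1 ≤ K ∧ K ≤ 2 * n + 3} =
        insert (2 * n + 3) {K : ℕ | Odd K ∧ 1 ≤ K ∧ K ≤ 2 * n + 1} := by
      ext K
      simp only [Set.mem_ofPred_eq, Set.mem_insert_iff, Nat.odd_iff]
      omega
    have hlb : lb q (2 * n + 3) ≤ 1 - q := lb_le_one_sub hq.le hq1.le (n + 1)
    have hub : ub q (2 * n + 3) ≤ q := ub_le hq hq1 (n + 1)
    rw [hK, Set.biUnion_insert, ih, Set.Ioo_union_Ioo' (lb_lt_ub_add_two hq hq1 n) (by linarith),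
      min_eq_left (lb_add_two_le hq.le hq1.le n), max_eq_right hub]

end Union

theorem union_ic_intervals_general (q : ℝ) (hq : 1 / 2 < q) (hq1 : q < 1)
    (𝒦 : ℕ) (h𝒦 : Odd 𝒦) :
    (⋃ K ∈ {K : ℕ | Odd K ∧ 1 ≤ K ∧ K ≤ 𝒦}, Set.Ioo (lb q K) (ub q K)) =
      Set.Ioo (lb q 𝒦) q := by
  obtain ⟨n, rfl⟩ := h𝒦
  exact biUnion_Ioo_lb_ub hq hq1 n

/-- The union of the incentive-compatible prior intervals over odd batch sizes
1 ≤ K ≤ 𝒦 equals the interval (lb_𝒦(q), q). -/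
theorem union_ic_intervals (q : ℝ) (hq : 1 / 2 < q) (hq1 : q < 1)
    (𝒦 : ℕ) (h𝒦 : Odd 𝒦) (h𝒦pos : 0 < 𝒦) :
    (⋃ K ∈ {K : ℕ | Odd K ∧ 1 ≤ K ∧ K ≤ 𝒦}, Set.Ioo (lb q K) (ub q K)) =
      Set.Ioo (lb q 𝒦) q :=
  union_ic_intervals_general q hq hq1 𝒦 h𝒦
end

section
/- For every real number q with 1/2 < q < 1 and every real μ with 0 < μ < q, the set S(μ) := { odd positive integers K : lb_K(q) < μ < ub_K(q) } is nonempty and finite; moreover, for all μ, μ' with 0 < μ ≤ μ' < q, the maximum element of S(μ') is at most the maximum element of S(μ). (That is, the optimal batch size K̄(μ) := max S(μ) is weakly decreasing in μ.) -/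
/-!
Write `L n = lb q (2n+1)` and `U n = ub q (2n+1)`, so that `S(μ)` is the set of `2n+1` with
`μ ∈ (L n, U n)`. Adding two voters changes the lower tail by
`L (n+1) = L n - (2q-1) q P(X = n)` for `X ~ Bin(2n+1, q)`, and bounding the central masses by
the two tails turns this into the overlap `L n < U (n+1)`. Since `U 0 = q` and `U n → 0`
(the lower tail decays like `(4q(1-q))^n`), for `0 < μ < q` the largest `N` with `μ < U N`
satisfies `L N < U (N+1) ≤ μ`; hence `2N+1` is the largest element of `S(μ)`, and `N` is
antitone in `μ`.
-/

open Finset Filter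

/-- Set of incentive-compatible odd batch sizes for prior μ. -/
def icSet (q μ : ℝ) : Set ℕ := {K : ℕ | Odd K ∧ 0 < K ∧ lb q K < μ ∧ μ < ub q K}

open Topology

section OverlappingIntervals

variable {a b : ℕ → ℝ} {μ μ' : ℝ}

theorem finite_setOf_lt_of_tendsto_zero (hb : Tendsto b atTop (𝓝 0)) (hμ : 0 < μ) :
    {n | μ < b n}.Finite := by
  have hev : ∀ᶠ n in cofinite, b n < μ := by
    rw [Nat.cofinite_eq_atTop]
    exact hb.eventually (gt_mem_nhds hμ)
  exact (eventually_cofinite.1 hev).subset fun n hn => not_lt.2 hn.le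

theorem isGreatest_setOf_mem_Ioo (hab : ∀ n, a n < b (n + 1))
    (hb : Tendsto b atTop (𝓝 0)) (hμ : 0 < μ) (hμb : μ < b 0) :
    IsGreatest {n | μ ∈ Set.Ioo (a n) (b n)} (sSup {n | μ < b n}) := by
  have hbdd := (finite_setOf_lt_of_tendsto_zero hb hμ).bddAbove
  have hmem : μ < b (sSup {n | μ < b n}) := Nat.sSup_mem ⟨0, hμb⟩ hbdd
  have hnext : b (sSup {n | μ < b n} + 1) ≤ μ :=
    not_lt.1 fun h => (lt_add_one _).not_ge (le_csSup hbdd h)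
  exact ⟨⟨(hab _).trans_le hnext, hmem⟩, fun n hn => le_csSup hbdd hn.2⟩

theorem sSup_setOf_lt_le_of_le (hb : Tendsto b atTop (𝓝 0)) (hμ : 0 < μ) (hμμ' : μ ≤ μ')
    (hμ'b : μ' < b 0) : sSup {n | μ' < b n} ≤ sSup {n | μ < b n} :=
  csSup_le_csSup (finite_setOf_lt_of_tendsto_zero hb hμ).bddAbove ⟨0, hμ'b⟩
    fun _ hn => hμμ'.trans_lt hn

end OverlappingIntervals

noncomputable def binTerm (q : ℝ) (K y : ℕ) : ℝ := K.choose y * q ^ y * (1 - q) ^ (K - y)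

/-- The probability that `Bin(K, q) < m`. -/
noncomputable def binCDF (q : ℝ) (K m : ℕ) : ℝ := ∑ y ∈ range m, binTerm q K y

section Binomial

variable {q : ℝ}

theorem binTerm_nonneg (hq0 : 0 ≤ q) (hq1 : q ≤ 1) (K y : ℕ) : 0 ≤ binTerm q K y :=
  mul_nonneg (mul_nonneg (Nat.cast_nonneg _) (pow_nonneg hq0 _)) (pow_nonneg (sub_nonneg.2 hq1) _)

theorem binTerm_pos (hq0 : 0 < q) (hq1 : q < 1) {K y : ℕ} (hy : y ≤ K) : 0 < binTerm q K y :=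
  mul_pos (mul_pos (Nat.cast_pos.2 (Nat.choose_pos hy)) (pow_pos hq0 _))
    (pow_pos (sub_pos.2 hq1) _)

theorem binTerm_succ_succ (q : ℝ) (K y : ℕ) :
    binTerm q (K + 1) (y + 1) = q * binTerm q K y + (1 - q) * binTerm q K (y + 1) := by
  unfold binTerm
  rw [Nat.choose_succ_succ, Nat.succ_sub_succ]
  rcases lt_or_ge y K with hy | hy
  · rw [show K - y = K - (y + 1) + 1 by omega]
    push_cast
    ring
  · rw [Nat.choose_eq_zero_of_lt (by omega : K < y + 1), Nat.sub_eq_zero_of_le hy]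
    push_cast
    ring

theorem binTerm_succ_zero (q : ℝ) (K : ℕ) : binTerm q (K + 1) 0 = (1 - q) * binTerm q K 0 := by
  simp only [binTerm, Nat.choose_zero_right, Nat.sub_zero, pow_succ]
  ring

theorem binCDF_nonneg (hq0 : 0 ≤ q) (hq1 : q ≤ 1) (K m : ℕ) : 0 ≤ binCDF q K m :=
  sum_nonneg fun y _ => binTerm_nonneg hq0 hq1 K y

theorem binCDF_succ_succ (q : ℝ) (K m : ℕ) :
    binCDF q (K + 1) (m + 1) = q * binCDF q K m + (1 - q) * binCDF q K (m + 1) := by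
  simp only [binCDF, sum_range_succ' (binTerm q (K + 1)), sum_range_succ' (binTerm q K) m,
    binTerm_succ_succ, binTerm_succ_zero, sum_add_distrib, ← mul_sum]
  ring

theorem binCDF_add_two (q : ℝ) (K m : ℕ) :
    binCDF q (K + 2) (m + 2) = q ^ 2 * binCDF q K m + 2 * q * (1 - q) * binCDF q K (m + 1)
      + (1 - q) ^ 2 * binCDF q K (m + 2) := by
  rw [binCDF_succ_succ, binCDF_succ_succ, binCDF_succ_succ]
  ring

theorem binCDF_self_add_one (q : ℝ) (K : ℕ) : binCDF q K (K + 1) = 1 := by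
  have h := (add_pow q (1 - q) K).symm
  rw [add_sub_cancel, one_pow] at h
  rw [← h, binCDF]
  exact sum_congr rfl fun y _ => by rw [binTerm]; ring

theorem lb_eq_binCDF (q : ℝ) (K : ℕ) : lb q K = binCDF q K ((K + 1) / 2) := by
  have hsplit := sum_range_add_sum_Ico (binTerm q K) (by omega : (K + 1) / 2 ≤ K + 1)
  rw [← binCDF, ← binCDF, binCDF_self_add_one, Ico_add_one_right_eq_Icc] at hsplit
  exact (eq_sub_of_add_eq hsplit).symm

end Binomial

/-- `ub q K = ubMap q (lb q K)`: the map multiplies the odds `x / (1 - x)` by `(q / (1 - q))²`. -/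
noncomputable def ubMap (q x : ℝ) : ℝ := q ^ 2 * x / (q ^ 2 * x + (1 - q) ^ 2 * (1 - x))

section UbMap

variable {q : ℝ}

theorem ub_eq_ubMap (q : ℝ) (K : ℕ) : ub q K = ubMap q (lb q K) := by
  rw [ubMap, lb, sub_sub_cancel]
  rfl

theorem ubMap_one_sub (hq0 : 0 < q) (hq1 : q < 1) : ubMap q (1 - q) = q := by
  have hden : q ^ 2 * (1 - q) + (1 - q) ^ 2 * (1 - (1 - q)) = q * (1 - q) := by ring
  rw [ubMap, hden, div_eq_iff (mul_pos hq0 (sub_pos.2 hq1)).ne']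
  ring

theorem tendsto_ubMap_zero (hq1 : q < 1) : Tendsto (ubMap q) (𝓝 0) (𝓝 0) := by
  have hcont : ContinuousAt (ubMap q) 0 :=
    (continuousAt_const.mul continuousAt_id).div
      ((continuousAt_const.mul continuousAt_id).add
        (continuousAt_const.mul (continuousAt_const.sub continuousAt_id)))
      (by simpa using sub_ne_zero.2 hq1.ne')
  simpa [ubMap] using hcont.tendsto

/-- In the application `a = lb q (2n+1)`, `a - (2q-1)c = lb q (2n+3)` and
`c = q P(X = n) = (1-q) P(X = n+1)` for `X ~ Bin(2n+1, q)`. -/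
theorem lt_ubMap_of_step {a c : ℝ} (hq : 1 / 2 < q) (hq1 : q < 1) (hc : 0 < c)
    (hca : c ≤ q * a) (hca' : c ≤ (1 - q) * (1 - a)) : a < ubMap q (a - (2 * q - 1) * c) := by
  have ha0 : 0 < a := by nlinarith
  have ha1 : 0 < 1 - a := by nlinarith
  have hb0 : 0 ≤ a - (2 * q - 1) * c := by
    nlinarith [mul_pos (by linarith : 0 < 2 - 2 * q) hc, mul_pos (by linarith : 0 < 1 - q) ha0]
  have hb1 : 0 < 1 - (a - (2 * q - 1) * c) := by
    nlinarith [mul_pos (by linarith : 0 < 2 * q - 1) hc]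
  have hden : 0 < q ^ 2 * (a - (2 * q - 1) * c) + (1 - q) ^ 2 * (1 - (a - (2 * q - 1) * c)) :=
    add_pos_of_nonneg_of_pos (mul_nonneg (sq_nonneg q) hb0)
      (mul_pos (pow_pos (by linarith) 2) hb1)
  rw [ubMap, lt_div_iff₀ hden]
  have hmass : c * (a * (1 - q) ^ 2 + (1 - a) * q ^ 2) ≤ a * (1 - a) * ((1 - q) ^ 3 + q ^ 3) := by
    nlinarith [mul_le_mul_of_nonneg_left hca' (by positivity : 0 ≤ a * (1 - q) ^ 2),
      mul_le_mul_of_nonneg_left hca (by positivity : 0 ≤ (1 - a) * q ^ 2)]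
  -- `(1 - q)^3 + q^3 = 1 - 3q(1 - q) < 1`
  have hgap : 0 < a * (1 - a) - c * (a * (1 - q) ^ 2 + (1 - a) * q ^ 2) := by
    nlinarith [mul_pos (mul_pos ha0 ha1) (mul_pos (by linarith : 0 < q) (by linarith : 0 < 1 - q))]
  nlinarith [mul_pos (by linarith : 0 < 2 * q - 1) hgap]

end UbMap

section OddBatch

variable {q : ℝ}

theorem lb_odd (q : ℝ) (n : ℕ) : lb q (2 * n + 1) = binCDF q (2 * n + 1) (n + 1) := by
  rw [lb_eq_binCDF]
  congr 1
  omega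

theorem mul_binTerm_mid (q : ℝ) (n : ℕ) :
    q * binTerm q (2 * n + 1) n = (1 - q) * binTerm q (2 * n + 1) (n + 1) := by
  rw [binTerm, binTerm, ← Nat.choose_symm_half, show 2 * n + 1 - n = n + 1 by omega,
    show 2 * n + 1 - (n + 1) = n by omega]
  ring

theorem lb_odd_succ (q : ℝ) (n : ℕ) :
    lb q (2 * (n + 1) + 1) = lb q (2 * n + 1) - (2 * q - 1) * (q * binTerm q (2 * n + 1) n) := by
  have hstep := binCDF_add_two q (2 * n + 1) n
  have h1 : binCDF q (2 * n + 1) (n + 1) = binCDF q (2 * n + 1) n + binTerm q (2 * n + 1) n :=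
    sum_range_succ _ _
  have h2 : binCDF q (2 * n + 1) (n + 2) =
      binCDF q (2 * n + 1) (n + 1) + binTerm q (2 * n + 1) (n + 1) :=
    sum_range_succ _ _
  rw [lb_odd, lb_odd, show 2 * (n + 1) + 1 = 2 * n + 1 + 2 by ring]
  linear_combination hstep - q ^ 2 * h1 + (1 - q) ^ 2 * h2 - (1 - q) * mul_binTerm_mid q n
theorem lb_odd_le (hq : 1 / 2 ≤ q) (hq1 : q ≤ 1) (n : ℕ) :
    lb q (2 * n + 1) ≤ (1 - q) * (4 * q * (1 - q)) ^ n := by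
  have hq0 : 0 ≤ q := by linarith
  have h1q : 0 ≤ 1 - q := sub_nonneg.2 hq1
  have hterm : ∀ y ∈ range (n + 1),
      binTerm q (2 * n + 1) y ≤ (2 * n + 1).choose y * (q ^ n * (1 - q) ^ (n + 1)) := by
    intro y hy
    have hyn : y ≤ n := Nat.lt_succ_iff.1 (mem_range.1 hy)
    have hqn : q ^ n = q ^ y * q ^ (n - y) := by rw [← pow_add, Nat.add_sub_cancel' hyn]
    calc binTerm q (2 * n + 1) y
        = (2 * n + 1).choose y * q ^ y * (1 - q) ^ (n + 1) * (1 - q) ^ (n - y) := by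
          rw [binTerm, show 2 * n + 1 - y = n + 1 + (n - y) by omega, pow_add]
          ring
      _ ≤ (2 * n + 1).choose y * q ^ y * (1 - q) ^ (n + 1) * q ^ (n - y) :=
          mul_le_mul_of_nonneg_left (pow_le_pow_left₀ h1q (by linarith) _)
            (mul_nonneg (mul_nonneg (Nat.cast_nonneg _) (pow_nonneg hq0 _)) (pow_nonneg h1q _))
      _ = (2 * n + 1).choose y * (q ^ n * (1 - q) ^ (n + 1)) := by rw [hqn]; ring
  calc lb q (2 * n + 1)
      ≤ ∑ y ∈ range (n + 1), ((2 * n + 1).choose y : ℝ) * (q ^ n * (1 - q) ^ (n + 1)) := by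
        rw [lb_odd]
        exact sum_le_sum hterm
    _ = (1 - q) * (4 * q * (1 - q)) ^ n := by
        rw [← sum_mul, ← Nat.cast_sum, Nat.sum_range_choose_halfway, mul_pow, mul_pow]
        push_cast
        ring

theorem tendsto_lb_odd (hq : 1 / 2 < q) (hq1 : q ≤ 1) :
    Tendsto (fun n => lb q (2 * n + 1)) atTop (𝓝 0) := by
  have hgeom : Tendsto (fun n : ℕ => (1 - q) * (4 * q * (1 - q)) ^ n) atTop (𝓝 0) := by
    simpa using (tendsto_pow_atTop_nhds_zero_of_lt_one (by nlinarith) (by nlinarith)).const_mul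
      (1 - q)
  refine squeeze_zero (fun n => ?_) (lb_odd_le hq.le hq1) hgeom
  rw [lb_odd]
  exact binCDF_nonneg (by linarith) hq1 _ _

theorem tendsto_ub_odd (hq : 1 / 2 < q) (hq1 : q < 1) :
    Tendsto (fun n => ub q (2 * n + 1)) atTop (𝓝 0) := by
  simp only [ub_eq_ubMap]
  exact (tendsto_ubMap_zero hq1).comp (tendsto_lb_odd hq hq1.le)

theorem lb_lt_ub_odd_succ (hq : 1 / 2 < q) (hq1 : q < 1) (n : ℕ) :
    lb q (2 * n + 1) < ub q (2 * (n + 1) + 1) := by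
  have hq0 : 0 < q := by linarith
  have hmid : binTerm q (2 * n + 1) n ≤ lb q (2 * n + 1) := by
    rw [lb_odd]
    exact single_le_sum (fun y _ => binTerm_nonneg hq0.le hq1.le _ y) (self_mem_range_succ n)
  have hmid' : binTerm q (2 * n + 1) (n + 1) ≤ 1 - lb q (2 * n + 1) := by
    rw [lb, sub_sub_cancel]
    exact single_le_sum (f := binTerm q (2 * n + 1)) (fun y _ => binTerm_nonneg hq0.le hq1.le _ y)
      (by rw [mem_Icc]; omega)
  rw [ub_eq_ubMap, lb_odd_succ]
  refine lt_ubMap_of_step hq hq1 (mul_pos hq0 (binTerm_pos hq0 hq1 (by omega))) ?_ ?_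
  · exact mul_le_mul_of_nonneg_left hmid hq0.le
  · rw [mul_binTerm_mid]
    exact mul_le_mul_of_nonneg_left hmid' (by linarith)

theorem ub_one (hq0 : 0 < q) (hq1 : q < 1) : ub q 1 = q := by
  have hlb : lb q 1 = 1 - q := by simp [lb_eq_binCDF, binCDF, binTerm]
  rw [ub_eq_ubMap, hlb, ubMap_one_sub hq0 hq1]

theorem icSet_eq_image (q μ : ℝ) :
    icSet q μ =
      (fun n => 2 * n + 1) '' {n | μ ∈ Set.Ioo (lb q (2 * n + 1)) (ub q (2 * n + 1))} := by
  ext K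
  constructor
  · rintro ⟨⟨n, rfl⟩, -, hlb, hub⟩
    exact ⟨n, ⟨hlb, hub⟩, rfl⟩
  · rintro ⟨n, ⟨hlb, hub⟩, rfl⟩
    exact ⟨⟨n, rfl⟩, Nat.succ_pos _, hlb, hub⟩

end OddBatch

/-- For every prior 0 < μ < q, the set of incentive-compatible batch sizes is nonempty
and finite, and its maximum K̄(μ) is weakly decreasing in μ. -/
theorem optimal_batch_size_antitone (q : ℝ) (hq : 1 / 2 < q) (hq1 : q < 1) :
    (∀ μ : ℝ, 0 < μ → μ < q → (icSet q μ).Nonempty ∧ (icSet q μ).Finite) ∧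
      ∀ μ μ' : ℝ, 0 < μ → μ ≤ μ' → μ' < q →
        sSup (icSet q μ') ≤ sSup (icSet q μ) := by
  have hub := tendsto_ub_odd hq hq1
  have hub0 : ub q (2 * 0 + 1) = q := ub_one (by linarith) hq1
  have hodd : StrictMono fun n : ℕ => 2 * n + 1 := fun _ _ h => by dsimp only; omega
  have hmax : ∀ μ, 0 < μ → μ < q →
      IsGreatest (icSet q μ) (2 * sSup {n | μ < ub q (2 * n + 1)} + 1) := fun μ hμ hμq => by
    rw [icSet_eq_image]
    exact hodd.map_isGreatest.2
      (isGreatest_setOf_mem_Ioo (lb_lt_ub_odd_succ hq hq1) hub hμ (hub0.symm ▸ hμq))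
  refine ⟨fun μ hμ hμq => ⟨(hmax μ hμ hμq).nonempty, (hmax μ hμ hμq).bddAbove.finite⟩,
    fun μ μ' hμ hμμ' hμ'q => ?_⟩
  rw [(hmax μ' (hμ.trans_le hμμ') hμ'q).csSup_eq, (hmax μ hμ (hμμ'.trans_lt hμ'q)).csSup_eq]
  have hN := sSup_setOf_lt_le_of_le hub hμ hμμ' (hub0.symm ▸ hμ'q)
  omega
end

section
/- For all real numbers q, μ with 1/2 < q < 1 and 0 ≤ μ ≤ q: μq + (μ(1-q) + (1-μ)q) · (q³ + 3q²(1-q)) > 2μq(1-q) + q². -/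
/-- A lower bound on the correctness of the two-batch greedy voting mechanism strictly
exceeds the correctness 2μq(1-q) + q² of the sequential offering mechanism. -/
theorem two_batch_greedy_beats_sequential (q μ : ℝ) (hq : 1 / 2 < q) (hq1 : q < 1)
    (hμ0 : 0 ≤ μ) (hμq : μ ≤ q) :
    μ * q + (μ * (1 - q) + (1 - μ) * q) * (q ^ 3 + 3 * q ^ 2 * (1 - q)) >
      2 * μ * q * (1 - q) + q ^ 2 := by
  nlinarith [sq_nonneg (q-μ), sq_nonneg (2*q-1), sq_nonneg q, mul_pos (sub_pos.2 hq1) (sub_pos.2 hq), mul_nonneg hμ0 (sub_nonneg.2 hq1.le), sq_nonneg (1-q), mul_nonneg (mul_nonneg hμ0 (sub_nonneg.2 hq1.le)) (sq_nonneg (2*q-1)), mul_nonneg (sub_nonneg.2 hμq) (sq_nonneg (2*q-1)), mul_nonneg (mul_nonneg (sub_nonneg.2 hq1.le) (sub_nonneg.2 hq1.le)) (sub_nonneg.2 hq.le)]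
end
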